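/- Let d > 0, α₀ ∈ ℝ, r(α) = √(d / cos(2(α−α₀))) for |α − α₀| < π/4, U(α,β) = r(α)·(cos α cos β, sin α cos β, cos α sin β, sin α sin β), τ₁(α,β) = N(∂U/∂α(α,β)), τ₂(α,β) = N(∂U/∂β(α,β)), and η(α,β) = N(∂U/∂α(α,β)). Then for all t₁, t₂ with α₀ − π/4 < t₁ < t₂ < α₀ + π/4 and every continuously differentiable compactly supported vector field X : ℝ⁴ → ℝ⁴, ∫_{t₁}^{t₂} ∫_0^{2π} ( ⟨τ₁, DX(U(α,β)) τ₁⟩ + ⟨τ₂, DX(U(α,β)) τ₂⟩ ) · r(α) · √((r'(α))² + (r(α))²) dβ dα = ∫_0^{2π} ⟨X(U(t₂,β)), η(t₂,β)⟩ · r(t₂) dβ − ∫_0^{2π} ⟨X(U(t₁,β)), η(t₁,β)⟩ · r(t₁) dβ. (This is the first-variation formula for the ring varifold V^{d,α₀}_{t₁,t₂}.) -/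

import Mathlib

open Real MeasureTheory
open scoped RealInnerProductSpace

/-- `r^{d,α₀}(α) = √(d / cos(2(α−α₀)))`. -/
noncomputable def rr (d α₀ α : ℝ) : ℝ := Real.sqrt (d / Real.cos (2 * (α - α₀)))

/-- The surface parameterization
`U(α,β) = r(α)·(cos α cos β, sin α cos β, cos α sin β, sin α sin β)`. -/
noncomputable def U (d α₀ α β : ℝ) : EuclideanSpace ℝ (Fin 4) :=
  rr d α₀ α •
    (WithLp.toLp 2 ![Real.cos α * Real.cos β, Real.sin α * Real.cos β,
       Real.cos α * Real.sin β, Real.sin α * Real.sin β] :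
      EuclideanSpace ℝ (Fin 4))

/-- Radial unit vector `N(x) = x / ‖x‖`. -/
noncomputable def N (x : EuclideanSpace ℝ (Fin 4)) : EuclideanSpace ℝ (Fin 4) :=
  ‖x‖⁻¹ • x

/-!
Write `c = cos 2(α - α₀)`, `s = sin 2(α - α₀)` and `U = r e`, where `e`, `e_α = ∂_α e`,
`e_β = ∂_β e` is an orthonormal frame. Then `r' = r s / c` and `|∂_α U| = r / c`, so
`τ₁ = s e + c e_α`, `τ₂ = e_β`, and the area element is `r² / c`. The integrand equals
`∂_α G + ∂_β H` for `G = ⟨X ∘ U, r τ₁⟩` and `H = ⟨X ∘ U, (r / c) e_β⟩`: the only terms free of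
`DX` are `(r / c)⟨X, e⟩`, coming from `∂_α (r τ₁) = (r / c) e`, and `-(r / c)⟨X, e⟩`, coming from
`∂_β e_β = -e`, and they cancel because the ring is minimal. As `H` is `2π`-periodic in `β`,
Fubini and the fundamental theorem of calculus in `α` leave only the boundary terms of `G`.
-/

open Set

local notation "ℝ⁴" => EuclideanSpace ℝ (Fin 4)

theorem hasDerivAt_piLp {ι : Type*} [Fintype ι] {f : ℝ → EuclideanSpace ℝ ι}
    {f' : EuclideanSpace ℝ ι} {x : ℝ} (h : ∀ i, HasDerivAt (fun y => f y i) (f' i) x) :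
    HasDerivAt f f' x := by
  rw [hasDerivAt_iff_hasFDerivAt, ← hasFDerivWithinAt_univ, hasFDerivWithinAt_piLp]
  exact fun i => (h i).hasFDerivAt.hasFDerivWithinAt

theorem setIntegral_Ioo_eq_sub_of_hasDerivAt {f f' : ℝ → ℝ} {a b : ℝ} (hab : a ≤ b)
    (hf : ∀ x ∈ Icc a b, HasDerivAt f (f' x) x) (hf' : ContinuousOn f' (Icc a b)) :
    ∫ x in Ioo a b, f' x = f b - f a := by
  rw [← integral_Ioc_eq_integral_Ioo, ← intervalIntegral.integral_of_le hab]
  refine intervalIntegral.integral_eq_sub_of_hasDerivAt (by rwa [uIcc_of_le hab]) ?_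
  exact (hf'.mono (uIcc_of_le hab).le).intervalIntegrable

/-- The divergence theorem on the cylinder `[t₁, t₂] × ℝ/Lℤ`, in terms of partial derivatives. -/
theorem setIntegral_Ioo_setIntegral_Ioo_add_eq_sub {G H g h : ℝ → ℝ → ℝ} {t₁ t₂ L : ℝ}
    (ht : t₁ ≤ t₂) (hL : 0 ≤ L)
    (hG : ∀ a ∈ Icc t₁ t₂, ∀ b ∈ Icc 0 L, HasDerivAt (G · b) (g a b) a)
    (hH : ∀ a ∈ Ioo t₁ t₂, ∀ b ∈ Icc 0 L, HasDerivAt (H a) (h a b) b)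
    (hper : ∀ a ∈ Ioo t₁ t₂, H a L = H a 0)
    (hg : ContinuousOn (Function.uncurry g) (Icc t₁ t₂ ×ˢ Icc 0 L))
    (hh : ∀ a ∈ Ioo t₁ t₂, ContinuousOn (h a) (Icc 0 L))
    (hG₁ : ContinuousOn (G t₁) (Icc 0 L)) (hG₂ : ContinuousOn (G t₂) (Icc 0 L)) :
    ∫ a in Ioo t₁ t₂, ∫ b in Ioo 0 L, (g a b + h a b) =
      (∫ b in Ioo 0 L, G t₂ b) - ∫ b in Ioo 0 L, G t₁ b := by
  have hg_slice : ∀ a ∈ Icc t₁ t₂, ContinuousOn (g a) (Icc 0 L) := fun a ha =>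
    hg.comp (Continuous.prodMk_right a).continuousOn fun b hb => ⟨ha, hb⟩
  have hh_vanish : ∀ a ∈ Ioo t₁ t₂, ∫ b in Ioo 0 L, h a b = 0 := fun a ha => by
    rw [setIntegral_Ioo_eq_sub_of_hasDerivAt hL (hH a ha) (hh a ha), hper a ha, sub_self]
  have hg_int : Integrable (Function.uncurry g)
      ((volume.restrict (Ioo t₁ t₂)).prod (volume.restrict (Ioo 0 L))) := by
    rw [Measure.prod_restrict]
    exact (hg.integrableOn_compact (isCompact_Icc.prod isCompact_Icc)).mono_set
      (prod_mono Ioo_subset_Icc_self Ioo_subset_Icc_self)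
  calc ∫ a in Ioo t₁ t₂, ∫ b in Ioo 0 L, (g a b + h a b)
      = ∫ a in Ioo t₁ t₂, ∫ b in Ioo 0 L, g a b := by
        refine setIntegral_congr_fun measurableSet_Ioo fun a ha => ?_
        rw [integral_add ((hg_slice a (Ioo_subset_Icc_self ha)).integrableOn_Icc.mono_set
          Ioo_subset_Icc_self) ((hh a ha).integrableOn_Icc.mono_set Ioo_subset_Icc_self),
          hh_vanish a ha, add_zero]
    _ = ∫ b in Ioo 0 L, ∫ a in Ioo t₁ t₂, g a b := integral_integral_swap hg_int
    _ = ∫ b in Ioo 0 L, (G t₂ b - G t₁ b) := by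
        refine setIntegral_congr_fun measurableSet_Ioo fun b hb => ?_
        exact setIntegral_Ioo_eq_sub_of_hasDerivAt ht
          (fun a ha => hG a ha b (Ioo_subset_Icc_self hb))
          (hg.comp (Continuous.prodMk_left b).continuousOn fun a ha => ⟨ha, Ioo_subset_Icc_self hb⟩)
    _ = (∫ b in Ioo 0 L, G t₂ b) - ∫ b in Ioo 0 L, G t₁ b :=
        integral_sub ((hG₂.integrableOn_Icc (μ := volume)).mono_set Ioo_subset_Icc_self)
          ((hG₁.integrableOn_Icc (μ := volume)).mono_set Ioo_subset_Icc_self)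

noncomputable def frameR (a b : ℝ) : ℝ⁴ :=
  WithLp.toLp 2 ![cos a * cos b, sin a * cos b, cos a * sin b, sin a * sin b]

noncomputable def frameA (a b : ℝ) : ℝ⁴ :=
  WithLp.toLp 2 ![-(sin a * cos b), cos a * cos b, -(sin a * sin b), cos a * sin b]

noncomputable def frameB (a b : ℝ) : ℝ⁴ :=
  WithLp.toLp 2 ![-(cos a * sin b), -(sin a * sin b), cos a * cos b, sin a * cos b]

section Frame

variable (a b : ℝ)

theorem hasDerivAt_frameR_fst : HasDerivAt (frameR · b) (frameA a b) a :=
  hasDerivAt_piLp fun i => by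
    fin_cases i <;> simp only [frameR, frameA, PiLp.toLp_apply, Fin.reduceFinMk, Fin.isValue,
      Matrix.cons_val] <;>
      exact (DifferentiableAt.hasDerivAt (by fun_prop)).congr_deriv (by simp)

theorem hasDerivAt_frameA_fst : HasDerivAt (frameA · b) (-frameR a b) a :=
  hasDerivAt_piLp fun i => by
    fin_cases i <;> simp only [frameR, frameA, PiLp.toLp_apply, PiLp.neg_apply, Fin.reduceFinMk,
      Fin.isValue, Matrix.cons_val] <;>
      exact (DifferentiableAt.hasDerivAt (by fun_prop)).congr_deriv (by simp)

theorem hasDerivAt_frameR_snd : HasDerivAt (frameR a ·) (frameB a b) b :=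
  hasDerivAt_piLp fun i => by
    fin_cases i <;> simp only [frameR, frameB, PiLp.toLp_apply, Fin.reduceFinMk, Fin.isValue,
      Matrix.cons_val] <;>
      exact (DifferentiableAt.hasDerivAt (by fun_prop)).congr_deriv (by simp)

theorem hasDerivAt_frameB_snd : HasDerivAt (frameB a ·) (-frameR a b) b :=
  hasDerivAt_piLp fun i => by
    fin_cases i <;> simp only [frameR, frameB, PiLp.toLp_apply, PiLp.neg_apply, Fin.reduceFinMk,
      Fin.isValue, Matrix.cons_val] <;>
      exact (DifferentiableAt.hasDerivAt (by fun_prop)).congr_deriv (by simp)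

theorem norm_frameB : ‖frameB a b‖ = 1 := by
  simp only [frameB, EuclideanSpace.norm_eq, norm_eq_abs, sq_abs, Fin.sum_univ_four, Fin.isValue,
    Matrix.cons_val_zero, even_two, Even.neg_pow, Matrix.cons_val_one, Matrix.cons_val, sqrt_eq_one]
  linear_combination (sin b ^ 2 + cos b ^ 2) * sin_sq_add_cos_sq a + sin_sq_add_cos_sq b

theorem norm_sin_smul_frameR_add_cos_smul_frameA (θ : ℝ) :
    ‖sin θ • frameR a b + cos θ • frameA a b‖ = 1 := by
  simp only [frameR, frameA, EuclideanSpace.norm_eq, PiLp.add_apply, PiLp.smul_apply, smul_eq_mul,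
    norm_eq_abs, sq_abs, Fin.sum_univ_four, Fin.isValue, Matrix.cons_val_zero, mul_neg,
    Matrix.cons_val_one, Matrix.cons_val, sqrt_eq_one]
  linear_combination (sin a ^ 2 + cos a ^ 2) * (sin b ^ 2 + cos b ^ 2) * sin_sq_add_cos_sq θ
    + (sin b ^ 2 + cos b ^ 2) * sin_sq_add_cos_sq a + sin_sq_add_cos_sq b

theorem frameR_two_pi : frameR a (2 * π) = frameR a 0 := by simp [frameR]

theorem frameB_two_pi : frameB a (2 * π) = frameB a 0 := by simp [frameB]

end Frame

section Radius

variable {d α₀ a : ℝ}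

theorem cos_two_mul_sub_pos (h₁ : α₀ - π / 4 < a) (h₂ : a < α₀ + π / 4) :
    0 < cos (2 * (a - α₀)) :=
  cos_pos_of_mem_Ioo ⟨by linarith, by linarith⟩

theorem rr_pos (hd : 0 < d) (hc : 0 < cos (2 * (a - α₀))) : 0 < rr d α₀ a :=
  sqrt_pos.2 (div_pos hd hc)

theorem hasDerivAt_cos_two_mul_sub (a : ℝ) :
    HasDerivAt (fun y => cos (2 * (y - α₀))) (-sin (2 * (a - α₀)) * 2) a :=
  (((hasDerivAt_id' a).sub_const α₀).const_mul 2).cos.congr_deriv (by ring)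

theorem hasDerivAt_sin_two_mul_sub (a : ℝ) :
    HasDerivAt (fun y => sin (2 * (y - α₀))) (cos (2 * (a - α₀)) * 2) a :=
  (((hasDerivAt_id' a).sub_const α₀).const_mul 2).sin.congr_deriv (by ring)

theorem hasDerivAt_rr (hd : 0 < d) (hc : 0 < cos (2 * (a - α₀))) :
    HasDerivAt (rr d α₀) (rr d α₀ a * sin (2 * (a - α₀)) / cos (2 * (a - α₀))) a := by
  refine (((hasDerivAt_const a d).div (hasDerivAt_cos_two_mul_sub a) hc.ne').sqrt
    (div_pos hd hc).ne').congr_deriv ?_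
  have hr : rr d α₀ a ^ 2 = d / cos (2 * (a - α₀)) := sq_sqrt (div_pos hd hc).le
  have hr₀ := (rr_pos hd hc).ne'
  change _ / (2 * rr d α₀ a) = _
  field_simp
  rw [hr]
  field_simp
  ring

theorem sqrt_deriv_rr_sq_add_rr_sq (hc : 0 < cos (2 * (a - α₀))) :
    √((rr d α₀ a * sin (2 * (a - α₀)) / cos (2 * (a - α₀))) ^ 2 + rr d α₀ a ^ 2)
      = rr d α₀ a / cos (2 * (a - α₀)) := by
  rw [← sqrt_sq (show 0 ≤ rr d α₀ a / cos (2 * (a - α₀)) from div_nonneg (sqrt_nonneg _) hc.le)]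
  congr 1
  field_simp
  linear_combination rr d α₀ a ^ 2 * sin_sq_add_cos_sq (2 * (a - α₀))

end Radius

theorem N_smul_of_pos {k : ℝ} {v : ℝ⁴} (hk : 0 < k) (hv : ‖v‖ = 1) : N (k • v) = v := by
  rw [N, norm_smul, hv, mul_one, Real.norm_of_nonneg hk.le, smul_smul, inv_mul_cancel₀ hk.ne',
    one_smul]

noncomputable def tangentα (α₀ a b : ℝ) : ℝ⁴ :=
  sin (2 * (a - α₀)) • frameR a b + cos (2 * (a - α₀)) • frameA a b

section Surface

variable {d α₀ a : ℝ} (b : ℝ)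

theorem U_eq_smul_frameR : U d α₀ a b = rr d α₀ a • frameR a b := rfl

theorem hasDerivAt_U_fst (hd : 0 < d) (hc : 0 < cos (2 * (a - α₀))) :
    HasDerivAt (U d α₀ · b) ((rr d α₀ a / cos (2 * (a - α₀))) • tangentα α₀ a b) a := by
  refine ((hasDerivAt_rr hd hc).smul (hasDerivAt_frameR_fst a b)).congr_deriv ?_
  rw [tangentα, smul_add, smul_smul, smul_smul, div_mul_cancel₀ _ hc.ne', mul_div_right_comm,
    add_comm]

theorem hasDerivAt_U_snd : HasDerivAt (U d α₀ a ·) (rr d α₀ a • frameB a b) b :=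
  (hasDerivAt_frameR_snd a b).fun_const_smul _

theorem N_deriv_U_fst (hd : 0 < d) (hc : 0 < cos (2 * (a - α₀))) :
    N (deriv (U d α₀ · b) a) = tangentα α₀ a b := by
  rw [(hasDerivAt_U_fst b hd hc).deriv]
  exact N_smul_of_pos (div_pos (rr_pos hd hc) hc) (norm_sin_smul_frameR_add_cos_smul_frameA a b _)

theorem N_deriv_U_snd (hd : 0 < d) (hc : 0 < cos (2 * (a - α₀))) :
    N (deriv (U d α₀ a ·) b) = frameB a b := by
  rw [(hasDerivAt_U_snd b).deriv]
  exact N_smul_of_pos (rr_pos hd hc) (norm_frameB a b)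

theorem hasDerivAt_rr_smul_tangentα (hd : 0 < d) (hc : 0 < cos (2 * (a - α₀))) :
    HasDerivAt (fun y => rr d α₀ y • tangentα α₀ y b)
      ((rr d α₀ a / cos (2 * (a - α₀))) • frameR a b) a := by
  have hr := hasDerivAt_rr hd hc
  have expand : (fun y => rr d α₀ y • tangentα α₀ y b) = fun y =>
      (rr d α₀ y * sin (2 * (y - α₀))) • frameR y b
        + (rr d α₀ y * cos (2 * (y - α₀))) • frameA y b := by
    funext y; rw [tangentα, smul_add, smul_smul, smul_smul]
  rw [expand]
  refine (((hr.fun_mul (hasDerivAt_sin_two_mul_sub a)).smul (hasDerivAt_frameR_fst a b)).add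
    ((hr.fun_mul (hasDerivAt_cos_two_mul_sub a)).smul (hasDerivAt_frameA_fst a b))).congr_deriv ?_
  have coeff_R : rr d α₀ a * sin (2 * (a - α₀)) / cos (2 * (a - α₀)) * sin (2 * (a - α₀))
      + rr d α₀ a * (cos (2 * (a - α₀)) * 2) - rr d α₀ a * cos (2 * (a - α₀))
      = rr d α₀ a / cos (2 * (a - α₀)) := by
    field_simp
    linear_combination rr d α₀ a * sin_sq_add_cos_sq (2 * (a - α₀))
  have coeff_A : rr d α₀ a * sin (2 * (a - α₀))
      + (rr d α₀ a * sin (2 * (a - α₀)) / cos (2 * (a - α₀)) * cos (2 * (a - α₀))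
        + rr d α₀ a * (-sin (2 * (a - α₀)) * 2)) = 0 := by
    field_simp
    ring
  linear_combination (norm := module) coeff_R • frameR a b + coeff_A • frameA a b

end Surface

section Flux

variable (d α₀ : ℝ) (X : ℝ⁴ → ℝ⁴)

noncomputable def conormalFlux (a b : ℝ) : ℝ :=
  ⟪X (U d α₀ a b), rr d α₀ a • tangentα α₀ a b⟫

noncomputable def conormalFluxDeriv (a b : ℝ) : ℝ :=
  ⟪X (U d α₀ a b), (rr d α₀ a / cos (2 * (a - α₀))) • frameR a b⟫
    + ⟪fderiv ℝ X (U d α₀ a b) ((rr d α₀ a / cos (2 * (a - α₀))) • tangentα α₀ a b),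
      rr d α₀ a • tangentα α₀ a b⟫

noncomputable def circleFlux (a b : ℝ) : ℝ :=
  ⟪X (U d α₀ a b), (rr d α₀ a / cos (2 * (a - α₀))) • frameB a b⟫

noncomputable def circleFluxDeriv (a b : ℝ) : ℝ :=
  ⟪X (U d α₀ a b), (rr d α₀ a / cos (2 * (a - α₀))) • -frameR a b⟫
    + ⟪fderiv ℝ X (U d α₀ a b) (rr d α₀ a • frameB a b),
      (rr d α₀ a / cos (2 * (a - α₀))) • frameB a b⟫

variable {d α₀ X} {a : ℝ} (b : ℝ)

theorem hasDerivAt_conormalFlux (hX : Differentiable ℝ X) (hd : 0 < d)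
    (hc : 0 < cos (2 * (a - α₀))) :
    HasDerivAt (conormalFlux d α₀ X · b) (conormalFluxDeriv d α₀ X a b) a :=
  ((hX _).hasFDerivAt.comp_hasDerivAt a (hasDerivAt_U_fst b hd hc)).inner ℝ
    (hasDerivAt_rr_smul_tangentα b hd hc)

theorem hasDerivAt_circleFlux (hX : Differentiable ℝ X) :
    HasDerivAt (circleFlux d α₀ X a) (circleFluxDeriv d α₀ X a b) b :=
  ((hX _).hasFDerivAt.comp_hasDerivAt b (hasDerivAt_U_snd b)).inner ℝ
    ((hasDerivAt_frameB_snd a b).fun_const_smul _)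

theorem circleFlux_two_pi : circleFlux d α₀ X a (2 * π) = circleFlux d α₀ X a 0 := by
  rw [circleFlux, circleFlux, U_eq_smul_frameR, U_eq_smul_frameR, frameR_two_pi, frameB_two_pi]

theorem inner_N_deriv_U_fst_mul_rr (hd : 0 < d) (hc : 0 < cos (2 * (a - α₀))) :
    ⟪X (U d α₀ a b), N (deriv (U d α₀ · b) a)⟫ * rr d α₀ a = conormalFlux d α₀ X a b := by
  rw [N_deriv_U_fst b hd hc, conormalFlux, real_inner_smul_right, mul_comm]

theorem firstVariation_integrand_eq (hd : 0 < d) (hc : 0 < cos (2 * (a - α₀))) :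
    (⟪N (deriv (U d α₀ · b) a), fderiv ℝ X (U d α₀ a b) (N (deriv (U d α₀ · b) a))⟫
      + ⟪N (deriv (U d α₀ a ·) b), fderiv ℝ X (U d α₀ a b) (N (deriv (U d α₀ a ·) b))⟫)
      * (rr d α₀ a * √((deriv (rr d α₀) a) ^ 2 + (rr d α₀ a) ^ 2))
    = conormalFluxDeriv d α₀ X a b + circleFluxDeriv d α₀ X a b := by
  rw [N_deriv_U_fst b hd hc, N_deriv_U_snd b hd hc, (hasDerivAt_rr hd hc).deriv,
    sqrt_deriv_rr_sq_add_rr_sq hc, conormalFluxDeriv, circleFluxDeriv]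
  simp only [map_smul, real_inner_smul_right, inner_neg_right,
    real_inner_comm (tangentα α₀ a b), real_inner_comm (frameB a b)]
  ring

end Flux

section Continuity

variable {d α₀ : ℝ} {X : ℝ⁴ → ℝ⁴}

theorem continuous_conormalFlux (hX : Continuous X) (a : ℝ) :
    Continuous (conormalFlux d α₀ X a) := by
  unfold conormalFlux U tangentα frameR frameA
  fun_prop

theorem continuous_circleFluxDeriv (hX : ContDiff ℝ 1 X) (a : ℝ) :
    Continuous (circleFluxDeriv d α₀ X a) := by
  have hX₀ := hX.continuous
  have hX₁ := hX.continuous_fderiv one_ne_zero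
  unfold circleFluxDeriv U frameR frameB
  fun_prop

theorem continuousOn_conormalFluxDeriv (hX : ContDiff ℝ 1 X) :
    ContinuousOn (Function.uncurry (conormalFluxDeriv d α₀ X))
      {p | 0 < cos (2 * (p.1 - α₀))} := by
  have hX₀ := hX.continuous
  have hX₁ := hX.continuous_fderiv one_ne_zero
  have hc : ∀ p ∈ {p : ℝ × ℝ | 0 < cos (2 * (p.1 - α₀))}, cos (2 * (p.1 - α₀)) ≠ 0 :=
    fun _ hp => ne_of_gt hp
  unfold Function.uncurry conormalFluxDeriv U rr tangentα frameR frameA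
  fun_prop (disch := assumption)

end Continuity

theorem stmt_13_general (d α₀ : ℝ) (hd : 0 < d) (t₁ t₂ : ℝ)
    (ht₁ : α₀ - π / 4 < t₁) (ht : t₁ < t₂) (ht₂ : t₂ < α₀ + π / 4)
    (X : EuclideanSpace ℝ (Fin 4) → EuclideanSpace ℝ (Fin 4))
    (hX : ContDiff ℝ 1 X) :
    (∫ α in Set.Ioo t₁ t₂,
      ∫ β in Set.Ioo (0 : ℝ) (2 * π),
        (⟪N (deriv (fun a => U d α₀ a β) α),
            fderiv ℝ X (U d α₀ α β) (N (deriv (fun a => U d α₀ a β) α))⟫ +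
         ⟪N (deriv (fun b => U d α₀ α b) β),
            fderiv ℝ X (U d α₀ α β) (N (deriv (fun b => U d α₀ α b) β))⟫) *
          (rr d α₀ α *
            Real.sqrt ((deriv (rr d α₀) α) ^ 2 + (rr d α₀ α) ^ 2)))
    = (∫ β in Set.Ioo (0 : ℝ) (2 * π),
        ⟪X (U d α₀ t₂ β), N (deriv (fun a => U d α₀ a β) t₂)⟫ * rr d α₀ t₂)
      - ∫ β in Set.Ioo (0 : ℝ) (2 * π),
        ⟪X (U d α₀ t₁ β), N (deriv (fun a => U d α₀ a β) t₁)⟫ * rr d α₀ t₁ := by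
  have hc : ∀ a ∈ Icc t₁ t₂, 0 < cos (2 * (a - α₀)) := fun a ha =>
    cos_two_mul_sub_pos (ht₁.trans_le ha.1) (ha.2.trans_lt ht₂)
  have hX₁ : Differentiable ℝ X := hX.differentiable one_ne_zero
  simp only [inner_N_deriv_U_fst_mul_rr _ hd (hc t₁ ⟨le_rfl, ht.le⟩),
    inner_N_deriv_U_fst_mul_rr _ hd (hc t₂ ⟨ht.le, le_rfl⟩)]
  rw [← setIntegral_Ioo_setIntegral_Ioo_add_eq_sub ht.le two_pi_pos.le
    (fun a ha b _ => hasDerivAt_conormalFlux b hX₁ hd (hc a ha))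
    (fun _ _ b _ => hasDerivAt_circleFlux (d := d) (α₀ := α₀) b hX₁)
    (fun _ _ => circleFlux_two_pi)
    ((continuousOn_conormalFluxDeriv hX).mono fun p hp => hc p.1 hp.1)
    (fun a _ => (continuous_circleFluxDeriv hX a).continuousOn)
    (continuous_conormalFlux hX.continuous t₁).continuousOn
    (continuous_conormalFlux hX.continuous t₂).continuousOn]
  refine setIntegral_congr_fun measurableSet_Ioo fun a ha => ?_
  simp only [firstVariation_integrand_eq _ hd (hc a (Ioo_subset_Icc_self ha))]

theorem stmt_13 (d α₀ : ℝ) (hd : 0 < d) (t₁ t₂ : ℝ)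
    (ht₁ : α₀ - π / 4 < t₁) (ht : t₁ < t₂) (ht₂ : t₂ < α₀ + π / 4)
    (X : EuclideanSpace ℝ (Fin 4) → EuclideanSpace ℝ (Fin 4))
    (hX : ContDiff ℝ 1 X) (hXc : HasCompactSupport X) :
    (∫ α in Set.Ioo t₁ t₂,
      ∫ β in Set.Ioo (0 : ℝ) (2 * π),
        (⟪N (deriv (fun a => U d α₀ a β) α),
            fderiv ℝ X (U d α₀ α β) (N (deriv (fun a => U d α₀ a β) α))⟫ +
         ⟪N (deriv (fun b => U d α₀ α b) β),
            fderiv ℝ X (U d α₀ α β) (N (deriv (fun b => U d α₀ α b) β))⟫) *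
          (rr d α₀ α *
            Real.sqrt ((deriv (rr d α₀) α) ^ 2 + (rr d α₀ α) ^ 2)))
    = (∫ β in Set.Ioo (0 : ℝ) (2 * π),
        ⟪X (U d α₀ t₂ β), N (deriv (fun a => U d α₀ a β) t₂)⟫ * rr d α₀ t₂)
      - ∫ β in Set.Ioo (0 : ℝ) (2 * π),
        ⟪X (U d α₀ t₁ β), N (deriv (fun a => U d α₀ a β) t₁)⟫ * rr d α₀ t₁ :=
  stmt_13_general d α₀ hd t₁ t₂ ht₁ ht ht₂ X hX
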